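/- For every nonnegative integer n, the following (ℓ+1)×(ℓ+1) matrix identity holds: −n(n−1)Q₁ + nP₁ − (α+2ℓ+3k)V = (α+2ℓ+3k+3n)·(−n(U+(n−1)I) − V) + 3n(ℓ+k+n)(n+α+β+ℓ+1)·I. In other words, the eigenvalue matrices Γ_n(D) = −n(U+(n−1)I) − V and Γ_n(E) = −n(n−1)Q₁ + nP₁ − (α+2ℓ+3k)V of the monic orthogonal polynomials satisfy Γ_n(E) = (α+2ℓ+3k+3n)Γ_n(D) + 3n(ℓ+k+n)(n+α+β+ℓ+1)I; in particular Γ_n(D) and Γ_n(E) commute. -/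
import Mathlib


open Matrix

noncomputable section

/-- The matrix `U`. -/
def Umat (α β : ℝ) (ℓ : ℕ) : Matrix (Fin (ℓ+1)) (Fin (ℓ+1)) ℂ :=
  Matrix.of fun i j =>
    if (i : ℕ) = (j : ℕ) then (α : ℂ) + β + ℓ + (i : ℕ) + 2 else 0

/-- The matrix `V`. -/
def Vmat (α β k : ℝ) (ℓ : ℕ) : Matrix (Fin (ℓ+1)) (Fin (ℓ+1)) ℂ :=
  Matrix.of fun i j =>
    (if (i : ℕ) = (j : ℕ) then ((i : ℕ) : ℂ) * ((α : ℂ) + β + (i : ℕ) - k + 1) else 0)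
      - (if (j : ℕ) = (i : ℕ) + 1 then ((ℓ : ℂ) - (i : ℕ)) * ((i : ℕ) + (β : ℂ) - k + 1) else 0)

/-- The matrix `Q₁ = Σ (α−ℓ+3i)E_{ii}`. -/
def Q1mat (α : ℝ) (ℓ : ℕ) : Matrix (Fin (ℓ+1)) (Fin (ℓ+1)) ℂ :=
  Matrix.of fun i j => if (i : ℕ) = (j : ℕ) then (α : ℂ) - ℓ + 3 * (i : ℕ) else 0

/-- The matrix `P₁`. -/
def P1mat (α β k : ℝ) (ℓ : ℕ) : Matrix (Fin (ℓ+1)) (Fin (ℓ+1)) ℂ :=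
  Matrix.of fun i j =>
    (if (i : ℕ) = (j : ℕ) then
        -(((α : ℂ) - ℓ + 3 * (i : ℕ)) * ((α : ℂ) + β + ℓ + (i : ℕ) + 2))
      else 0)
      + (if (j : ℕ) = (i : ℕ) + 1 then
          3 * ((β : ℂ) - k + 1 + (i : ℕ)) * ((ℓ : ℂ) - (i : ℕ))
        else 0)

/-- The eigenvalue matrix `Γ_n(D) = −n(U+(n−1)I) − V` of the monic orthogonal polynomials. -/
def GammaD (α β k : ℝ) (ℓ : ℕ) (n : ℕ) : Matrix (Fin (ℓ+1)) (Fin (ℓ+1)) ℂ :=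
  -((n : ℂ) • (Umat α β ℓ + ((n : ℂ) - 1) • (1 : Matrix (Fin (ℓ+1)) (Fin (ℓ+1)) ℂ)))
    - Vmat α β k ℓ

/-- The eigenvalue matrix `Γ_n(E) = −n(n−1)Q₁ + nP₁ − (α+2ℓ+3k)V`. -/
def GammaE (α β k : ℝ) (ℓ : ℕ) (n : ℕ) : Matrix (Fin (ℓ+1)) (Fin (ℓ+1)) ℂ :=
  -(((n : ℂ) * ((n : ℂ) - 1)) • Q1mat α ℓ) + (n : ℂ) • P1mat α β k ℓ
    - ((α + 2 * ℓ + 3 * k : ℝ) : ℂ) • Vmat α β k ℓ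

/-- For every `n ∈ ℕ₀`:
`Γ_n(E) = (α+2ℓ+3k+3n)·Γ_n(D) + 3n(ℓ+k+n)(n+α+β+ℓ+1)·I`; in particular `Γ_n(D)` and
`Γ_n(E)` commute. -/
theorem GammaE_eq_GammaD_relation (α β k : ℝ) (ℓ : ℕ) (hα : -1 < α) (hβ : -1 < β)
    (hk0 : 0 < k) (hk1 : k < β + 1) (hℓ : 0 < ℓ) (n : ℕ) :
    GammaE α β k ℓ n
        = ((α + 2 * ℓ + 3 * k + 3 * n : ℝ) : ℂ) • GammaD α β k ℓ n
          + ((3 * n * (ℓ + k + n) * (n + α + β + ℓ + 1) : ℝ) : ℂ)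
              • (1 : Matrix (Fin (ℓ+1)) (Fin (ℓ+1)) ℂ)
      ∧ GammaD α β k ℓ n * GammaE α β k ℓ n = GammaE α β k ℓ n * GammaD α β k ℓ n := by
  have key : GammaE α β k ℓ n
      = ((α + 2 * ℓ + 3 * k + 3 * n : ℝ) : ℂ) • GammaD α β k ℓ n
        + ((3 * n * (ℓ + k + n) * (n + α + β + ℓ + 1) : ℝ) : ℂ)
            • (1 : Matrix (Fin (ℓ+1)) (Fin (ℓ+1)) ℂ) := by
    ext i j
    simp only [GammaE, GammaD, Umat, Vmat, Q1mat, P1mat, Matrix.add_apply, Matrix.sub_apply,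
      Matrix.neg_apply, Matrix.smul_apply, Matrix.of_apply, Matrix.one_apply, smul_eq_mul]
    have hij : (i = j) ↔ ((i:ℕ) = (j:ℕ)) := Fin.val_eq_val i j |>.symm
    by_cases h1 : (i:ℕ) = (j:ℕ)
    · rw [if_pos (hij.mpr h1)]
      have h2 : ¬ ((j:ℕ) = (i:ℕ) + 1) := by omega
      have h2' : ¬ ((j:ℕ) = (j:ℕ) + 1) := by omega
      simp only [if_neg h2, h1, if_pos rfl, if_neg h2']
      push_cast
      ring
    · rw [if_neg (fun h => h1 (hij.mp h))]
      simp only [if_neg h1]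
      by_cases h2 : (j:ℕ) = (i:ℕ) + 1
      · simp only [if_pos h2]; push_cast; ring
      · simp only [if_neg h2]; ring
  refine ⟨key, ?_⟩
  rw [key]
  simp only [Matrix.mul_add, Matrix.add_mul, Matrix.mul_smul, Matrix.smul_mul,
    Matrix.mul_one, Matrix.one_mul]
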